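/- Let v, J, Γ : ℝ → ℝ be functions such that: (a) v(y) ≥ J(y) for all y and v(0) = J(0); (b) J is differentiable at 0; (c) v − Γ is concave on ℝ; (d) Γ is differentiable at 0. Then v is differentiable at 0 and v'(0) = J'(0). -/

import Mathlib

/-!
Subtracting the smooth correction `Γ` reduces the theorem to a concave function `ψ = v - Γ`
touched from below at `0` by the function `φ = J - Γ`, which is differentiable there. At the
touching point every secant slope of `ψ` through `0` lies between the slopes of `φ` at `y` and at
the mirror point `-y`: on the side where `ψ` lies above `φ` its slope is larger, on the other side
smaller, and concavity orders the two slopes of `ψ`. Both bounds tend to `φ'(0)`.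
-/

open Filter Topology Set

variable {s : Set ℝ} {φ ψ : ℝ → ℝ} {x y d : ℝ}

lemma slope_le_slope_of_le_of_eq_of_lt (hle : φ y ≤ ψ y) (heq : φ x = ψ x) (hxy : x < y) :
    slope φ x y ≤ slope ψ x y := by
  rw [slope_def_field, slope_def_field]
  exact div_le_div_of_nonneg_right (by linarith) (by linarith)

lemma slope_le_slope_of_le_of_eq_of_gt (hle : φ y ≤ ψ y) (heq : φ x = ψ x) (hyx : y < x) :
    slope ψ x y ≤ slope φ x y := by
  rw [slope_def_field, slope_def_field]
  exact div_le_div_of_nonpos_of_le (by linarith) (by linarith)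

lemma ConcaveOn.slope_mem_uIcc_slope_reflect (hψ : ConcaveOn ℝ s ψ)
    (hle : ∀ z ∈ s, φ z ≤ ψ z) (heq : φ x = ψ x) (hx : x ∈ s) (hy : y ∈ s)
    (hy' : 2 * x - y ∈ s) (hyx : y ≠ x) :
    slope ψ x y ∈ uIcc (slope φ x y) (slope φ x (2 * x - y)) := by
  have hanti := hψ.slope_anti hx
  have hy'x : 2 * x - y ∈ s \ {x} :=
    ⟨hy', fun h => hyx (by linarith [mem_singleton_iff.mp h])⟩
  rcases hyx.lt_or_gt with hlt | hgt
  · refine mem_uIcc_of_ge ?_ (slope_le_slope_of_le_of_eq_of_gt (hle y hy) heq hlt)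
    calc slope φ x (2 * x - y) ≤ slope ψ x (2 * x - y) :=
          slope_le_slope_of_le_of_eq_of_lt (hle _ hy') heq (by linarith)
      _ ≤ slope ψ x y := hanti ⟨hy, hyx⟩ hy'x (by linarith)
  · refine mem_uIcc_of_le (slope_le_slope_of_le_of_eq_of_lt (hle y hy) heq hgt) ?_
    calc slope ψ x y ≤ slope ψ x (2 * x - y) :=
          hanti hy'x ⟨hy, hyx⟩ (by linarith)
      _ ≤ slope φ x (2 * x - y) :=
          slope_le_slope_of_le_of_eq_of_gt (hle _ hy') heq (by linarith)

lemma tendsto_reflect_nhdsNE (x : ℝ) :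
    Tendsto (fun y => 2 * x - y) (𝓝[≠] x) (𝓝[≠] x) := by
  refine tendsto_nhdsWithin_of_tendsto_nhds_of_eventually_within _ ?_ ?_
  · exact ((by fun_prop : Continuous fun y : ℝ => 2 * x - y).tendsto' x x (by ring)).mono_left
      nhdsWithin_le_nhds
  · filter_upwards [self_mem_nhdsWithin] with y (hy : y ≠ x)
    simp only [mem_compl_iff, mem_singleton_iff]
    contrapose! hy
    linarith

lemma ConcaveOn.hasDerivAt_of_le_of_hasDerivAt (hψ : ConcaveOn ℝ s ψ) (hs : s ∈ 𝓝 x)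
    (hle : ∀ z ∈ s, φ z ≤ ψ z) (heq : φ x = ψ x) (hφ : HasDerivAt φ d x) :
    HasDerivAt ψ d x := by
  rw [hasDerivAt_iff_tendsto_slope] at hφ ⊢
  have hφ' : Tendsto (fun y => slope φ x (2 * x - y)) (𝓝[≠] x) (𝓝 d) :=
    hφ.comp (tendsto_reflect_nhdsNE x)
  have hmem :
      ∀ᶠ y in 𝓝[≠] x, slope ψ x y ∈ uIcc (slope φ x y) (slope φ x (2 * x - y)) := by
    filter_upwards [nhdsWithin_le_nhds hs, tendsto_reflect_nhdsNE x (nhdsWithin_le_nhds hs),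
      self_mem_nhdsWithin] with y hy hy' hyx
    exact hψ.slope_mem_uIcc_slope_reflect hle heq (mem_of_mem_nhds hs) hy hy' hyx
  refine tendsto_of_tendsto_of_tendsto_of_le_of_le' (by simpa using hφ.min hφ')
    (by simpa using hφ.max hφ') ?_ ?_
  · filter_upwards [hmem] with y hy using hy.1
  · filter_upwards [hmem] with y hy using hy.2

/-- Envelope theorem: if `v ≥ J` with equality at `0`, `J` is differentiable
at `0`, `v − Γ` is concave and `Γ` is differentiable at `0`, then `v` is
differentiable at `0` with `v'(0) = J'(0)`. -/
theorem stmt5 (v J Γ : ℝ → ℝ)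
    (hvJ : ∀ y, J y ≤ v y) (h0 : v 0 = J 0)
    (hJ : DifferentiableAt ℝ J 0)
    (hconc : ConcaveOn ℝ Set.univ (fun y => v y - Γ y))
    (hΓ : DifferentiableAt ℝ Γ 0) :
    DifferentiableAt ℝ v 0 ∧ deriv v 0 = deriv J 0 := by
  have hψ : HasDerivAt (fun y => v y - Γ y) (deriv J 0 - deriv Γ 0) 0 :=
    hconc.hasDerivAt_of_le_of_hasDerivAt (φ := fun y => J y - Γ y) univ_mem
      (fun y _ => by linarith [hvJ y]) (by rw [h0]) (hJ.hasDerivAt.sub hΓ.hasDerivAt)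
  have hv : HasDerivAt v (deriv J 0) 0 := by
    have h := hψ.add hΓ.hasDerivAt
    rwa [sub_add_cancel, show (fun y => v y - Γ y) + Γ = v from
      funext fun y => sub_add_cancel (v y) (Γ y)] at h
  exact ⟨hv.differentiableAt, hv.deriv⟩
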